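/- arXiv:2604.00729 — 3 statements merged into one kernel-verified Lean document; each statement's English description precedes it below -/
import Mathlib

section
/- Let d ≥ 1, σ ∈ (0,1), let f : ℝ^d → ℝ be measurable with [f]_σ² = E_σ(f,f) < ∞, and let F : ℝ → ℝ be non-decreasing and Lipschitz continuous with Lipschitz constant L. Then [F∘f]_σ < ∞, and the inequalities E_σ(f, F∘f) ≤ L · E_σ(f, f) and E_σ(F∘f, F∘f) ≤ L · E_σ(F∘f, f) hold. -/
open MeasureTheory Filter Topology ENNReal

noncomputable section

/-- Euclidean space `ℝ^d`. -/
abbrev Rd (d : ℕ) : Type := EuclideanSpace ℝ (Fin d)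

/-- Second moment of a measure. -/
def m2 {d : ℕ} (μ : Measure (Rd d)) : ℝ≥0∞ := ∫⁻ x, ENNReal.ofReal (‖x‖ ^ 2) ∂μ

/-- Borel probability measure with finite second moment. -/
def IsP2 {d : ℕ} (μ : Measure (Rd d)) : Prop := IsProbabilityMeasure μ ∧ m2 μ < ⊤

/-- Fourier transform of a measure: `μ̂(ξ) = ∫ e^{-i x·ξ} dμ(x)`. -/
def ftM {d : ℕ} (μ : Measure (Rd d)) (ξ : Rd d) : ℂ :=
  ∫ x, Complex.exp (-(Complex.I) * ((inner ℝ x ξ : ℝ) : ℂ)) ∂μ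

/-- Squared homogeneous Sobolev norm `‖μ‖²_{Ḣ^σ}` of a measure. -/
def sobM {d : ℕ} (σ : ℝ) (μ : Measure (Rd d)) : ℝ≥0∞ :=
  ENNReal.ofReal ((2 * Real.pi) ^ (-(d : ℝ))) *
    ∫⁻ ξ, ENNReal.ofReal (‖ξ‖ ^ (2 * σ) * ‖ftM μ ξ‖ ^ 2)

/-- Normalisation constant of the Riesz kernel. -/
def rieszC (d : ℕ) (σ : ℝ) : ℝ :=
  Real.pi ^ (-(d : ℝ) / 2) * 2 ^ (-(2 * σ)) * Real.Gamma ((d : ℝ) / 2 - σ) / Real.Gamma σ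

/-- Riesz kernel `K_σ(x) = C_{d,σ} |x|^{-d+2σ}`. -/
def rieszK (d : ℕ) (σ : ℝ) (x : Rd d) : ℝ := rieszC d σ * ‖x‖ ^ (-(d : ℝ) + 2 * σ)

/-- Gradient of the Riesz kernel. -/
def gradRieszK (d : ℕ) (σ : ℝ) (x : Rd d) : Rd d :=
  ((2 * σ - d) * rieszC d σ * ‖x‖ ^ (2 * σ - (d : ℝ) - 2)) • x

/-- `(K_σ ∗ μ)(x)`. -/
def rieszConv (d : ℕ) (σ : ℝ) (μ : Measure (Rd d)) (x : Rd d) : ℝ :=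
  ∫ y, rieszK d σ (x - y) ∂μ

/-- `(∇K_σ ∗ μ)(x)`. -/
def gradRieszConv (d : ℕ) (σ : ℝ) (μ : Measure (Rd d)) (x : Rd d) : Rd d :=
  ∫ y, gradRieszK d σ (x - y) ∂μ

/-- Interaction energy functional `F(ρ,η)`. -/
def interEnergy (d : ℕ) (s r q : ℝ) (ρ η : Measure (Rd d)) : ℝ≥0∞ :=
  (1 / 2) * ∫⁻ p : Rd d × Rd d, ENNReal.ofReal (rieszK d s (p.1 - p.2)) ∂(ρ.prod ρ)
    + (1 / 2) * ∫⁻ p : Rd d × Rd d, ENNReal.ofReal (rieszK d r (p.1 - p.2)) ∂(η.prod η)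
    + ∫⁻ p : Rd d × Rd d, ENNReal.ofReal (rieszK d q (p.1 - p.2)) ∂(ρ.prod η)

/-- Squared 2-Wasserstein distance. -/
def W2sq {d : ℕ} (μ ν : Measure (Rd d)) : ℝ≥0∞ :=
  ⨅ (γ : Measure (Rd d × Rd d)) (_ : IsProbabilityMeasure γ)
    (_ : γ.map Prod.fst = μ ∧ γ.map Prod.snd = ν),
      ∫⁻ p : Rd d × Rd d, ENNReal.ofReal (‖p.1 - p.2‖ ^ 2) ∂γ

/-- Squared product 2-Wasserstein distance `W̄₂²((μ₁,μ₂),(ν₁,ν₂))`. -/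
def W2sqPair {d : ℕ} (μ₁ μ₂ ν₁ ν₂ : Measure (Rd d)) : ℝ≥0∞ := W2sq μ₁ ν₁ + W2sq μ₂ ν₂

/-- A JKO (minimising movement) sequence with step `τ` starting from `(ρ₀,η₀)`. -/
def IsJKO (d : ℕ) (s r q τ : ℝ) (ρ₀ η₀ : Measure (Rd d))
    (seq : ℕ → Measure (Rd d) × Measure (Rd d)) : Prop :=
  seq 0 = (ρ₀, η₀) ∧
    ∀ n : ℕ, IsP2 (seq (n + 1)).1 ∧ IsP2 (seq (n + 1)).2 ∧
      ∀ ρ η : Measure (Rd d), IsP2 ρ → IsP2 η →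
        ENNReal.ofReal (1 / (2 * τ)) *
            W2sqPair (seq n).1 (seq n).2 (seq (n + 1)).1 (seq (n + 1)).2
            + interEnergy d s r q (seq (n + 1)).1 (seq (n + 1)).2
          ≤ ENNReal.ofReal (1 / (2 * τ)) * W2sqPair (seq n).1 (seq n).2 ρ η
            + interEnergy d s r q ρ η

/-- Piecewise constant interpolation: equals `seq n` on `((n-1)τ, nτ]`. -/
def pwc {α : Type*} (τ : ℝ) (seq : ℕ → α) (t : ℝ) : α := seq ⌈t / τ⌉₊

/-- Narrow convergence of a sequence of measures. -/
def NarrowTendsto {d : ℕ} (μs : ℕ → Measure (Rd d)) (μ : Measure (Rd d)) : Prop :=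
  ∀ φ : Rd d → ℝ, Continuous φ → (∃ C : ℝ, ∀ x, |φ x| ≤ C) →
    Tendsto (fun n => ∫ x, φ x ∂(μs n)) atTop (𝓝 (∫ x, φ x ∂μ))

/-- Density of a measure with respect to Lebesgue measure. -/
def dens {d : ℕ} (μ : Measure (Rd d)) (x : Rd d) : ℝ := (μ.rnDeriv volume x).toReal

/-- Gagliardo bilinear form
`E_σ(f,g) = ∬ |x−y|^{-d-2σ} (f(x)−f(y))(g(x)−g(y)) dx dy`. -/
def gagliardo (d : ℕ) (σ : ℝ) (f g : Rd d → ℝ) : ℝ :=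
  ∫ p : Rd d × Rd d, ‖p.1 - p.2‖ ^ (-(d : ℝ) - 2 * σ) * (f p.1 - f p.2) * (g p.1 - g p.2)

/-- Gagliardo seminorm squared `[f]_σ² = E_σ(f,f)`, as a value in `[0,∞]`. -/
def gagliardoSq (d : ℕ) (σ : ℝ) (f : Rd d → ℝ) : ℝ≥0∞ :=
  ∫⁻ p : Rd d × Rd d,
    ENNReal.ofReal (‖p.1 - p.2‖ ^ (-(d : ℝ) - 2 * σ) * (f p.1 - f p.2) ^ 2)

/-- Composition with a non-decreasing `L`-Lipschitz function: `[F∘f]_σ < ∞`,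
`E_σ(f, F∘f) ≤ L·E_σ(f,f)` and `E_σ(F∘f, F∘f) ≤ L·E_σ(F∘f, f)`. -/
theorem statement3 (d : ℕ) (hd : 1 ≤ d) (σ : ℝ) (hσ : σ ∈ Set.Ioo (0 : ℝ) 1)
    (f : Rd d → ℝ) (hf : Measurable f) (hfin : gagliardoSq d σ f < ⊤)
    (F : ℝ → ℝ) (L : NNReal) (hmono : Monotone F) (hlip : LipschitzWith L F) :
    gagliardoSq d σ (F ∘ f) < ⊤ ∧
      gagliardo d σ f (F ∘ f) ≤ (L : ℝ) * gagliardo d σ f f ∧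
      gagliardo d σ (F ∘ f) (F ∘ f) ≤ (L : ℝ) * gagliardo d σ (F ∘ f) f := by
  classical
  set w : Rd d × Rd d → ℝ := fun p => ‖p.1 - p.2‖ ^ (-(d : ℝ) - 2 * σ) with hwdef
  set u : Rd d × Rd d → ℝ := fun p => f p.1 - f p.2 with hudef
  set v : Rd d × Rd d → ℝ := fun p => F (f p.1) - F (f p.2) with hvdef
  have hw0 : ∀ p, 0 ≤ w p := fun p => Real.rpow_nonneg (norm_nonneg _) _
  have hwm : Measurable w :=
    ((continuous_fst.sub continuous_snd).norm.measurable).pow measurable_const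
  have hum : Measurable u := (hf.comp measurable_fst).sub (hf.comp measurable_snd)
  have hFm : Measurable (F ∘ f) := hlip.continuous.measurable.comp hf
  have hvm : Measurable v :=
    (hFm.comp measurable_fst).sub (hFm.comp measurable_snd)
  -- pointwise facts
  have huv : ∀ p, 0 ≤ u p * v p := by
    intro p
    rcases le_total (f p.1) (f p.2) with h | h
    · have h1 : u p ≤ 0 := by simp [hudef]; linarith
      have h2 : v p ≤ 0 := by simp [hvdef]; exact hmono h
      nlinarith
    · have h1 : 0 ≤ u p := by simp [hudef]; linarith
      have h2 : 0 ≤ v p := by simp [hvdef]; exact hmono h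
      exact mul_nonneg h1 h2
  have hvle : ∀ p, |v p| ≤ (L : ℝ) * |u p| := by
    intro p
    simpa [Real.dist_eq, hudef, hvdef] using hlip.dist_le_mul (f p.1) (f p.2)
  have key1 : ∀ p, u p * v p ≤ (L : ℝ) * u p ^ 2 := by
    intro p
    calc u p * v p = |u p * v p| := (abs_of_nonneg (huv p)).symm
      _ = |u p| * |v p| := abs_mul _ _
      _ ≤ |u p| * ((L : ℝ) * |u p|) := mul_le_mul_of_nonneg_left (hvle p) (abs_nonneg _)
      _ = (L : ℝ) * u p ^ 2 := by rw [← sq_abs (u p)]; ring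
  have key2 : ∀ p, v p ^ 2 ≤ (L : ℝ) * (u p * v p) := by
    intro p
    calc v p ^ 2 = |v p| * |v p| := by rw [← sq_abs (v p)]; ring
      _ ≤ ((L : ℝ) * |u p|) * |v p| := mul_le_mul_of_nonneg_right (hvle p) (abs_nonneg _)
      _ = (L : ℝ) * (|u p| * |v p|) := by ring
      _ = (L : ℝ) * (u p * v p) := by rw [← abs_mul, abs_of_nonneg (huv p)]
  have key3 : ∀ p, v p ^ 2 ≤ (L : ℝ) ^ 2 * u p ^ 2 := by
    intro p
    calc v p ^ 2 ≤ (L : ℝ) * (u p * v p) := key2 p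
      _ ≤ (L : ℝ) * ((L : ℝ) * u p ^ 2) :=
          mul_le_mul_of_nonneg_left (key1 p) L.coe_nonneg
      _ = (L : ℝ) ^ 2 * u p ^ 2 := by ring
  -- integrability of the basic integrand
  have hg1m : Measurable fun p => w p * u p ^ 2 := hwm.mul (hum.pow_const 2)
  have hg1i : Integrable fun p => w p * u p ^ 2 := by
    refine ⟨hg1m.aestronglyMeasurable, ?_⟩
    rw [hasFiniteIntegral_iff_ofReal
      (ae_of_all _ fun p => mul_nonneg (hw0 p) (sq_nonneg _))]
    simpa [gagliardoSq, hwdef, hudef] using hfin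
  have hg2i : Integrable fun p => w p * (u p * v p) := by
    refine Integrable.mono' (hg1i.const_mul (L : ℝ))
      (hwm.mul (hum.mul hvm)).aestronglyMeasurable (ae_of_all _ fun p => ?_)
    rw [Real.norm_eq_abs, abs_of_nonneg (mul_nonneg (hw0 p) (huv p))]
    calc w p * (u p * v p) ≤ w p * ((L : ℝ) * u p ^ 2) :=
          mul_le_mul_of_nonneg_left (key1 p) (hw0 p)
      _ = (L : ℝ) * (w p * u p ^ 2) := by ring
  have hg3i : Integrable fun p => w p * v p ^ 2 := by
    refine Integrable.mono' (hg1i.const_mul ((L : ℝ) ^ 2))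
      (hwm.mul (hvm.pow_const 2)).aestronglyMeasurable (ae_of_all _ fun p => ?_)
    rw [Real.norm_eq_abs, abs_of_nonneg (mul_nonneg (hw0 p) (sq_nonneg _))]
    calc w p * v p ^ 2 ≤ w p * ((L : ℝ) ^ 2 * u p ^ 2) :=
          mul_le_mul_of_nonneg_left (key3 p) (hw0 p)
      _ = (L : ℝ) ^ 2 * (w p * u p ^ 2) := by ring
  refine ⟨?_, ?_, ?_⟩
  · -- finiteness
    have hle : gagliardoSq d σ (F ∘ f) ≤
        ENNReal.ofReal ((L : ℝ) ^ 2) * gagliardoSq d σ f := by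
      simp only [gagliardoSq, Function.comp_apply]
      rw [← lintegral_const_mul' _ _ ENNReal.ofReal_ne_top]
      refine lintegral_mono fun p => ?_
      rw [← ENNReal.ofReal_mul (by positivity)]
      refine ENNReal.ofReal_le_ofReal ?_
      calc ‖p.1 - p.2‖ ^ (-(d : ℝ) - 2 * σ) * (F (f p.1) - F (f p.2)) ^ 2
          = w p * v p ^ 2 := rfl
        _ ≤ w p * ((L : ℝ) ^ 2 * u p ^ 2) :=
            mul_le_mul_of_nonneg_left (key3 p) (hw0 p)
        _ = (L : ℝ) ^ 2 * (‖p.1 - p.2‖ ^ (-(d : ℝ) - 2 * σ) * (f p.1 - f p.2) ^ 2) := by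
            simp [hwdef, hudef]; ring
    exact hle.trans_lt (ENNReal.mul_lt_top ENNReal.ofReal_lt_top hfin)
  · -- first inequality
    have h1 : gagliardo d σ f (F ∘ f) = ∫ p, w p * (u p * v p) := by
      simp only [gagliardo, Function.comp_apply, hwdef, hudef, hvdef, mul_assoc]
    have h2 : gagliardo d σ f f = ∫ p, w p * u p ^ 2 := by
      simp only [gagliardo, hwdef, hudef]
      congr 1; funext p; ring
    rw [h1, h2, ← integral_const_mul]
    refine integral_mono hg2i (hg1i.const_mul _) fun p => ?_
    calc w p * (u p * v p) ≤ w p * ((L : ℝ) * u p ^ 2) :=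
          mul_le_mul_of_nonneg_left (key1 p) (hw0 p)
      _ = (L : ℝ) * (w p * u p ^ 2) := by ring
  · -- second inequality
    have h1 : gagliardo d σ (F ∘ f) (F ∘ f) = ∫ p, w p * v p ^ 2 := by
      simp only [gagliardo, Function.comp_apply, hwdef, hvdef]
      congr 1; funext p; ring
    have h2 : gagliardo d σ (F ∘ f) f = ∫ p, w p * (u p * v p) := by
      simp only [gagliardo, Function.comp_apply, hwdef, hudef, hvdef]
      congr 1; funext p; ring
    rw [h1, h2, ← integral_const_mul]
    refine integral_mono hg3i (hg2i.const_mul _) fun p => ?_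
    calc w p * v p ^ 2 ≤ w p * ((L : ℝ) * (u p * v p)) :=
          mul_le_mul_of_nonneg_left (key2 p) (hw0 p)
      _ = (L : ℝ) * (w p * (u p * v p)) := by ring
end
end

section
/- Let d ≥ 1, σ ∈ (0,1), p ∈ (1,∞), and let f : ℝ^d → [0,∞) be measurable. Then the Stroock–Varopoulos inequality holds: E_σ(f, f^p) ≥ (4p/(p+1)²) · [f^{(p+1)/2}]_σ², as an inequality in [0,+∞] (both sides are sums of nonnegative integrands). -/
open MeasureTheory Filter Topology ENNReal

noncomputable section

section StroockVaropoulosAux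
open MeasureTheory Set ENNReal

lemma sv_key (p : ℝ) (hp : 1 < p) {a b : ℝ} (hb : 0 ≤ b) (hba : b ≤ a) :
    4 * p / (p + 1) ^ 2 * (a ^ ((p + 1) / 2) - b ^ ((p + 1) / 2)) ^ 2
      ≤ (a - b) * (a ^ p - b ^ p) := by
  set q : ℝ := (p + 1) / 2 with hq
  have hq1 : 1 < q := by rw [hq]; linarith
  have hq0 : (0:ℝ) < q := by linarith
  have hp0 : (0:ℝ) < p := by linarith
  have ha : 0 ≤ a := le_trans hb hba
  have hint1 : IntegrableOn (fun t : ℝ => q * t ^ (q - 1)) (Ioc b a) :=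
    ((intervalIntegral.intervalIntegrable_rpow (r := q - 1) (a := b) (b := a)
      (μ := volume) (Or.inl (by linarith))).const_mul q).1
  have hint2 : IntegrableOn (fun t : ℝ => q ^ 2 * t ^ (p - 1)) (Ioc b a) :=
    ((intervalIntegral.intervalIntegrable_rpow (r := p - 1) (a := b) (b := a)
      (μ := volume) (Or.inl (by linarith))).const_mul (q ^ 2)).1
  have hval1 : ∫ t in Ioc b a, q * t ^ (q - 1) = a ^ q - b ^ q := by
    rw [← intervalIntegral.integral_of_le hba, intervalIntegral.integral_const_mul,
      integral_rpow (Or.inl (by linarith))]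
    have h1 : q - 1 + 1 = q := by ring
    rw [h1]
    field_simp
  have hval2 : ∫ t in Ioc b a, q ^ 2 * t ^ (p - 1) = q ^ 2 / p * (a ^ p - b ^ p) := by
    rw [← intervalIntegral.integral_of_le hba, intervalIntegral.integral_const_mul,
      integral_rpow (Or.inl (by linarith))]
    have h1 : p - 1 + 1 = p := by ring
    rw [h1]
    field_simp
  have hnn1 : 0 ≤ᵐ[volume.restrict (Ioc b a)] fun t : ℝ => q * t ^ (q - 1) := by
    filter_upwards [ae_restrict_mem measurableSet_Ioc] with t ht
    exact mul_nonneg hq0.le (Real.rpow_nonneg (le_trans hb ht.1.le) _)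
  have hnn2 : 0 ≤ᵐ[volume.restrict (Ioc b a)] fun t : ℝ => q ^ 2 * t ^ (p - 1) := by
    filter_upwards [ae_restrict_mem measurableSet_Ioc] with t ht
    exact mul_nonneg (sq_nonneg q) (Real.rpow_nonneg (le_trans hb ht.1.le) _)
  set μ := volume.restrict (Ioc b a) with hμ
  have hconj : Real.HolderConjugate 2 2 := Real.holderConjugate_iff.2 ⟨one_lt_two, by norm_num⟩
  have hg : AEMeasurable (fun t : ℝ => ENNReal.ofReal (q * t ^ (q - 1))) μ := by
    fun_prop
  have hCS := ENNReal.lintegral_mul_le_Lp_mul_Lq μ hconj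
    (aemeasurable_const (b := (1 : ℝ≥0∞))) hg
  simp only [one_mul, ENNReal.one_rpow, lintegral_const, Pi.mul_apply, Pi.one_apply] at hCS
  have hμuniv : μ Set.univ = ENNReal.ofReal (a - b) := by
    rw [hμ]; simp [Real.volume_Ioc]
  have hsq : ∫⁻ t, ENNReal.ofReal (q * t ^ (q - 1)) ^ (2:ℝ) ∂μ
      = ∫⁻ t, ENNReal.ofReal (q ^ 2 * t ^ (p - 1)) ∂μ := by
    apply lintegral_congr_ae
    filter_upwards [ae_restrict_mem measurableSet_Ioc] with t ht
    have ht0 : 0 ≤ t := le_trans hb ht.1.le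
    rw [ENNReal.ofReal_rpow_of_nonneg (mul_nonneg hq0.le (Real.rpow_nonneg ht0 _)) (by norm_num)]
    congr 1
    rw [show (2:ℝ) = ((2:ℕ):ℝ) by norm_num, Real.rpow_natCast, mul_pow,
      ← Real.rpow_natCast (t ^ (q-1)) 2, ← Real.rpow_mul ht0]
    congr 1
    push_cast
    rw [hq]; ring
  rw [hsq] at hCS
  rw [← ofReal_integral_eq_lintegral_ofReal hint1 hnn1, hval1,
    ← ofReal_integral_eq_lintegral_ofReal hint2 hnn2, hval2, hμuniv] at hCS
  -- square both sides
  set A := a ^ q - b ^ q with hA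
  set Y := ENNReal.ofReal (a - b) with hY
  set Z := ENNReal.ofReal (q ^ 2 / p * (a ^ p - b ^ p)) with hZ
  have hsq2 : ENNReal.ofReal A * ENNReal.ofReal A ≤ Y * Z := by
    calc ENNReal.ofReal A * ENNReal.ofReal A
        ≤ (Y ^ (1/2:ℝ) * Z ^ (1/2:ℝ)) * (Y ^ (1/2:ℝ) * Z ^ (1/2:ℝ)) := mul_le_mul' hCS hCS
      _ = (Y ^ (1/2:ℝ) * Y ^ (1/2:ℝ)) * (Z ^ (1/2:ℝ) * Z ^ (1/2:ℝ)) := by ring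
      _ = Y * Z := by
          rw [← ENNReal.rpow_add_of_nonneg _ _ (by norm_num) (by norm_num),
            ← ENNReal.rpow_add_of_nonneg (x := Z) _ _ (by norm_num) (by norm_num)]
          norm_num
  have hAn : 0 ≤ A := by
    rw [hA]; exact sub_nonneg.2 (Real.rpow_le_rpow hb hba hq0.le)
  have hD : 0 ≤ a ^ p - b ^ p := sub_nonneg.2 (Real.rpow_le_rpow hb hba hp0.le)
  rw [← ENNReal.ofReal_mul hAn, ← ENNReal.ofReal_mul (sub_nonneg.2 hba)] at hsq2
  have hreal : A * A ≤ (a - b) * (q ^ 2 / p * (a ^ p - b ^ p)) :=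
    (ENNReal.ofReal_le_ofReal_iff
      (mul_nonneg (sub_nonneg.2 hba)
        (mul_nonneg (div_nonneg (sq_nonneg q) hp0.le) hD))).1 hsq2
  have hc : 4 * p / (p + 1) ^ 2 = p / q ^ 2 := by
    rw [hq]; field_simp; ring
  rw [hc]
  have hq2 : (0:ℝ) < q ^ 2 := by positivity
  rw [div_mul_eq_mul_div, div_le_iff₀ hq2]
  calc p * A ^ 2 ≤ p * ((a - b) * (q ^ 2 / p * (a ^ p - b ^ p))) := by
        apply mul_le_mul_of_nonneg_left _ hp0.le
        rw [sq]; exact hreal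
    _ = (a - b) * (a ^ p - b ^ p) * q ^ 2 := by field_simp

lemma sv_key' (p : ℝ) (hp : 1 < p) {a b : ℝ} (ha : 0 ≤ a) (hb : 0 ≤ b) :
    4 * p / (p + 1) ^ 2 * (a ^ ((p + 1) / 2) - b ^ ((p + 1) / 2)) ^ 2
      ≤ (a - b) * (a ^ p - b ^ p) := by
  rcases le_total b a with h | h
  · exact sv_key p hp hb h
  · have := sv_key p hp ha h
    calc 4 * p / (p + 1) ^ 2 * (a ^ ((p + 1) / 2) - b ^ ((p + 1) / 2)) ^ 2
        = 4 * p / (p + 1) ^ 2 * (b ^ ((p + 1) / 2) - a ^ ((p + 1) / 2)) ^ 2 := by ring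
      _ ≤ (b - a) * (b ^ p - a ^ p) := this
      _ = (a - b) * (a ^ p - b ^ p) := by ring

end StroockVaropoulosAux

/-- Stroock–Varopoulos inequality:
`E_σ(f, f^p) ≥ (4p/(p+1)²) [f^{(p+1)/2}]_σ²`, as an inequality in `[0,∞]`. -/
theorem statement4 (d : ℕ) (hd : 1 ≤ d) (σ : ℝ) (hσ : σ ∈ Set.Ioo (0 : ℝ) 1)
    (p : ℝ) (hp : 1 < p) (f : Rd d → ℝ) (hf : Measurable f) (hf0 : ∀ x, 0 ≤ f x) :
    ENNReal.ofReal (4 * p / (p + 1) ^ 2) *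
        gagliardoSq d σ (fun x => f x ^ ((p + 1) / 2))
      ≤ ∫⁻ z : Rd d × Rd d,
          ENNReal.ofReal (‖z.1 - z.2‖ ^ (-(d : ℝ) - 2 * σ) *
            ((f z.1 - f z.2) * (f z.1 ^ p - f z.2 ^ p))) := by
  rw [gagliardoSq, ← lintegral_const_mul' _ _ ENNReal.ofReal_ne_top]
  apply lintegral_mono
  intro z
  dsimp only
  set w : ℝ := ‖z.1 - z.2‖ ^ (-(d : ℝ) - 2 * σ) with hw
  have hw0 : 0 ≤ w := Real.rpow_nonneg (norm_nonneg _) _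
  have hc0 : 0 ≤ 4 * p / (p + 1) ^ 2 := by positivity
  rw [← ENNReal.ofReal_mul hc0]
  apply ENNReal.ofReal_le_ofReal
  calc 4 * p / (p + 1) ^ 2 * (w * (f z.1 ^ ((p+1)/2) - f z.2 ^ ((p+1)/2)) ^ 2)
      = w * (4 * p / (p + 1) ^ 2 * (f z.1 ^ ((p+1)/2) - f z.2 ^ ((p+1)/2)) ^ 2) := by ring
    _ ≤ w * ((f z.1 - f z.2) * (f z.1 ^ p - f z.2 ^ p)) :=
        mul_le_mul_of_nonneg_left (sv_key' p hp (hf0 z.1) (hf0 z.2)) hw0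
end
end

section
/- Let d ≥ 1 and fix exponents 0 < s, r, q < min{1, d/2}. The interaction energy F satisfies F(ρ,η) ≥ 0 for every (ρ,η) ∈ P₂(ℝ^d)×P₂(ℝ^d), and F is sequentially lower semi-continuous with respect to narrow convergence: if (ρₙ,ηₙ) → (ρ,η) narrowly in P₂(ℝ^d)×P₂(ℝ^d) and sup_n F(ρₙ,ηₙ) < +∞, then F(ρ,η) ≤ liminf_{n→∞} F(ρₙ,ηₙ). -/
open MeasureTheory Filter Topology ENNReal

noncomputable section

/-! ### Auxiliary lemmas for Statement 5 -/

namespace S5Aux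

open Metric Set

/-! #### liminf helpers in `ℝ≥0∞` -/

lemma liminf_superadd (u v : ℕ → ℝ≥0∞) :
    liminf u atTop + liminf v atTop ≤ liminf (fun n => u n + v n) atTop := by
  have hu : Monotone (fun n : ℕ => ⨅ i, ⨅ (_ : i ≥ n), u i) := fun n m h =>
    le_iInf₂ fun k hk => iInf₂_le k (le_trans h hk)
  have hv : Monotone (fun n : ℕ => ⨅ i, ⨅ (_ : i ≥ n), v i) := fun n m h =>
    le_iInf₂ fun k hk => iInf₂_le k (le_trans h hk)
  calc liminf u atTop + liminf v atTop
      = ⨆ n : ℕ, ((⨅ i, ⨅ (_ : i ≥ n), u i) + ⨅ i, ⨅ (_ : i ≥ n), v i) := by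
        rw [liminf_eq_iSup_iInf_of_nat, liminf_eq_iSup_iInf_of_nat,
          ENNReal.iSup_add_iSup_of_monotone hu hv]
    _ ≤ ⨆ n : ℕ, ⨅ i, ⨅ (_ : i ≥ n), (u i + v i) := by
        refine iSup_mono fun n => le_iInf₂ fun k hk => ?_
        exact add_le_add (iInf₂_le k hk) (iInf₂_le k hk)
    _ = liminf (fun n => u n + v n) atTop := (liminf_eq_iSup_iInf_of_nat).symm

lemma liminf_const_mul_le (c : ℝ≥0∞) (u : ℕ → ℝ≥0∞) :
    c * liminf u atTop ≤ liminf (fun n => c * u n) atTop := by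
  rw [liminf_eq_iSup_iInf_of_nat, liminf_eq_iSup_iInf_of_nat, ENNReal.mul_iSup]
  exact iSup_mono fun n => le_iInf₂ fun k hk => mul_le_mul_right (iInf₂_le k hk) c

/-! #### Tightness from narrow convergence -/

lemma tightness {d : ℕ} {μs : ℕ → Measure (Rd d)} {μ : Measure (Rd d)}
    (hm : ∀ n, IsProbabilityMeasure (μs n)) (hμ : IsProbabilityMeasure μ)
    (h : NarrowTendsto μs μ) {ε : ℝ} (hε : 0 < ε) :
    ∃ R : ℝ, 0 < R ∧
      ∀ᶠ n in atTop, ((μs n) (Metric.closedBall 0 R)ᶜ).toReal ≤ ε := by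
  have hball : Tendsto (fun k : ℕ => μ (Metric.closedBall 0 (k : ℝ))) atTop
      (𝓝 (μ (⋃ k : ℕ, Metric.closedBall 0 (k : ℝ)))) :=
    tendsto_measure_iUnion_atTop
      (fun a b hab => Metric.closedBall_subset_closedBall (by exact_mod_cast hab))
  have hunion : (⋃ k : ℕ, Metric.closedBall (0 : Rd d) (k : ℝ)) = Set.univ := by
    ext x
    simp only [Set.mem_iUnion, Metric.mem_closedBall, Set.mem_univ, iff_true]
    obtain ⟨k, hk⟩ := exists_nat_ge (dist x 0)
    exact ⟨k, hk⟩
  rw [hunion, measure_univ] at hball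
  have hto : Tendsto (fun k : ℕ => (μ (Metric.closedBall 0 (k : ℝ))).toReal) atTop (𝓝 1) := by
    have h2 := (ENNReal.tendsto_toReal (one_ne_top)).comp hball
    simpa [Function.comp_def] using h2
  obtain ⟨k, hk⟩ := (hto.eventually (eventually_gt_nhds (by linarith : (1 : ℝ) - ε / 2 < 1))).exists
  set χ : Rd d → ℝ := fun x => max 0 (min 1 ((k : ℝ) + 1 - ‖x‖)) with hχ
  have χcont : Continuous χ :=
    continuous_const.max (continuous_const.min (continuous_const.sub continuous_norm))
  have χ0 : ∀ x, 0 ≤ χ x := fun x => le_max_left _ _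
  have χ1 : ∀ x, χ x ≤ 1 := fun x => max_le zero_le_one (min_le_left _ _)
  have χint : ∀ (ν : Measure (Rd d)), IsProbabilityMeasure ν → Integrable χ ν := by
    intro ν hν
    exact (integrable_const (1 : ℝ)).mono' χcont.aestronglyMeasurable
      (Filter.Eventually.of_forall fun x => by
        rw [Real.norm_eq_abs, abs_of_nonneg (χ0 x)]; exact χ1 x)
  have hlow : (μ (Metric.closedBall 0 (k : ℝ))).toReal ≤ ∫ x, χ x ∂μ := by
    have h1 : ∫ x, (Metric.closedBall (0 : Rd d) (k : ℝ)).indicator (fun _ => (1 : ℝ)) x ∂μ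
        = (μ (Metric.closedBall 0 (k : ℝ))).toReal := by
      rw [integral_indicator_const (1 : ℝ) measurableSet_closedBall, smul_eq_mul, mul_one, measureReal_def]
    rw [← h1]
    refine integral_mono ((integrable_const (1 : ℝ)).indicator measurableSet_closedBall)
      (χint μ hμ) (fun x => ?_)
    by_cases hx : x ∈ Metric.closedBall (0 : Rd d) (k : ℝ)
    · rw [Set.indicator_of_mem hx]
      have hxn : ‖x‖ ≤ (k : ℝ) := by
        simpa [Metric.mem_closedBall, dist_zero_right] using hx
      have h1' : (1 : ℝ) ≤ (k : ℝ) + 1 - ‖x‖ := by linarith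
      calc (1 : ℝ) = min 1 ((k : ℝ) + 1 - ‖x‖) := (min_eq_left h1').symm
        _ ≤ χ x := le_max_right _ _
    · rw [Set.indicator_of_notMem hx]; exact χ0 x
  have hup : ∀ n, ∫ x, χ x ∂(μs n) ≤ ((μs n) (Metric.closedBall 0 ((k : ℝ) + 1))).toReal := by
    intro n
    haveI := hm n
    have h1 : ∫ x, (Metric.closedBall (0 : Rd d) ((k : ℝ) + 1)).indicator
        (fun _ => (1 : ℝ)) x ∂(μs n)
        = ((μs n) (Metric.closedBall 0 ((k : ℝ) + 1))).toReal := by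
      rw [integral_indicator_const (1 : ℝ) measurableSet_closedBall, smul_eq_mul, mul_one, measureReal_def]
    rw [← h1]
    refine integral_mono (χint _ (hm n))
      ((integrable_const (1 : ℝ)).indicator measurableSet_closedBall) (fun x => ?_)
    by_cases hx : x ∈ Metric.closedBall (0 : Rd d) ((k : ℝ) + 1)
    · rw [Set.indicator_of_mem hx]; exact χ1 x
    · rw [Set.indicator_of_notMem hx]
      have hxn : (k : ℝ) + 1 < ‖x‖ := by
        simpa [Metric.mem_closedBall, dist_zero_right, not_le] using hx
      have hmin : min 1 ((k : ℝ) + 1 - ‖x‖) ≤ 0 :=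
        le_trans (min_le_right _ _) (by linarith)
      exact max_le le_rfl hmin
  refine ⟨(k : ℝ) + 1, by positivity, ?_⟩
  have hconv := h χ χcont ⟨1, fun x => by rw [abs_of_nonneg (χ0 x)]; exact χ1 x⟩
  have hgt : (1 : ℝ) - ε < ∫ x, χ x ∂μ := lt_of_lt_of_le (by linarith) hlow
  have hev : ∀ᶠ n in atTop, (1 : ℝ) - ε < ∫ x, χ x ∂(μs n) :=
    hconv.eventually (eventually_gt_nhds hgt)
  filter_upwards [hev] with n hn
  haveI := hm n
  have hms : MeasurableSet (Metric.closedBall (0 : Rd d) ((k : ℝ) + 1)) :=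
    measurableSet_closedBall
  have hsum : ((μs n) (Metric.closedBall 0 ((k : ℝ) + 1))).toReal
      + ((μs n) (Metric.closedBall 0 ((k : ℝ) + 1))ᶜ).toReal = 1 := by
    rw [← ENNReal.toReal_add (measure_ne_top _ _) (measure_ne_top _ _),
      measure_add_measure_compl hms, measure_univ, ENNReal.toReal_one]
  have h2 := le_trans hn.le (hup n)
  linarith

/-! #### Uniform convergence of equi-Lipschitz functions on compact sets -/

lemma unif_compact {d : ℕ} {K : Set (Rd d)} (hK : IsCompact K) {hs : ℕ → Rd d → ℝ}
    {h : Rd d → ℝ} {L : ℝ} (hL : 0 ≤ L)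
    (lips : ∀ n x y, |hs n x - hs n y| ≤ L * ‖x - y‖)
    (liph : ∀ x y, |h x - h y| ≤ L * ‖x - y‖)
    (hpt : ∀ x, Tendsto (fun n => hs n x) atTop (𝓝 (h x)))
    {ε : ℝ} (hε : 0 < ε) :
    ∀ᶠ n in atTop, ∀ x ∈ K, |hs n x - h x| ≤ ε := by
  set δ : ℝ := ε / (3 * (L + 1)) with hδ
  have hδpos : 0 < δ := by positivity
  obtain ⟨t, htK, hcover⟩ := hK.elim_nhds_subcover (fun x => Metric.ball x δ)
    (fun x _ => Metric.ball_mem_nhds x hδpos)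
  have hev : ∀ᶠ n in atTop, ∀ i ∈ t, |hs n i - h i| ≤ ε / 3 := by
    rw [Filter.eventually_all_finset]
    intro i _
    obtain ⟨N, hN⟩ := Metric.tendsto_atTop.mp (hpt i) (ε / 3) (by positivity)
    refine eventually_atTop.mpr ⟨N, fun n hn => ?_⟩
    have h2 := hN n hn
    rw [Real.dist_eq] at h2
    exact h2.le
  filter_upwards [hev] with n hn x hx
  obtain ⟨i, hi, hxi⟩ : ∃ i ∈ t, x ∈ Metric.ball i δ := by
    have h2 := hcover hx
    simpa using h2
  have hd : ‖x - i‖ ≤ δ := by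
    have h2 := Metric.mem_ball.mp hxi
    rw [dist_eq_norm] at h2
    exact h2.le
  have hnorm : ‖i - x‖ = ‖x - i‖ := norm_sub_rev i x
  have hLδ : L * ‖x - i‖ ≤ ε / 3 := by
    have h3 : (L + 1) * δ = ε / 3 := by
      rw [hδ]; field_simp
    nlinarith [norm_nonneg (x - i)]
  have tri : |hs n x - h x| ≤ |hs n x - hs n i| + |hs n i - h i| + |h i - h x| := by
    have t1 := abs_sub_le (hs n x) (hs n i) (h x)
    have t2 := abs_sub_le (hs n i) (h i) (h x)
    linarith
  have e1 := lips n x i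
  have e2 := hn i hi
  have e3 := liph i x
  rw [hnorm] at e3
  linarith

/-! #### Narrow convergence of product integrals for bounded Lipschitz kernels -/

lemma keyConv {d : ℕ} {B L : ℝ} (hB : 0 ≤ B) (hL : 0 ≤ L) {g : Rd d → Rd d → ℝ}
    (hcont : Continuous (fun p : Rd d × Rd d => g p.1 p.2))
    (hg0 : ∀ x y, 0 ≤ g x y) (hgB : ∀ x y, g x y ≤ B)
    (hlip : ∀ x x' y, |g x y - g x' y| ≤ L * ‖x - x'‖)
    {μs νs : ℕ → Measure (Rd d)} {μ ν : Measure (Rd d)}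
    (hμs : ∀ n, IsProbabilityMeasure (μs n)) (hνs : ∀ n, IsProbabilityMeasure (νs n))
    (hμ : IsProbabilityMeasure μ) (hν : IsProbabilityMeasure ν)
    (hμc : NarrowTendsto μs μ) (hνc : NarrowTendsto νs ν) :
    Tendsto (fun n => ∫ p : Rd d × Rd d, g p.1 p.2 ∂((μs n).prod (νs n))) atTop
      (𝓝 (∫ p : Rd d × Rd d, g p.1 p.2 ∂(μ.prod ν))) := by
  classical
  haveI := hμ; haveI := hν
  have intg : ∀ (κ ξ : Measure (Rd d)), IsProbabilityMeasure κ → IsProbabilityMeasure ξ →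
      Integrable (fun p : Rd d × Rd d => g p.1 p.2) (κ.prod ξ) := by
    intro κ ξ hκ hξ
    haveI := hκ; haveI := hξ
    refine (integrable_const B).mono' hcont.aestronglyMeasurable
      (Filter.Eventually.of_forall fun p => ?_)
    rw [Real.norm_eq_abs, abs_of_nonneg (hg0 _ _)]; exact hgB _ _
  have intgx : ∀ (ξ : Measure (Rd d)), IsProbabilityMeasure ξ → ∀ x,
      Integrable (fun y => g x y) ξ := by
    intro ξ hξ x
    haveI := hξ
    refine (integrable_const B).mono'
      ((hcont.comp (Continuous.prodMk_right x)).aestronglyMeasurable)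
      (Filter.Eventually.of_forall fun y => ?_)
    rw [Real.norm_eq_abs, abs_of_nonneg (hg0 _ _)]; exact hgB _ _
  set H : Measure (Rd d) → Rd d → ℝ := fun ξ x => ∫ y, g x y ∂ξ with hH
  have Hlip : ∀ (ξ : Measure (Rd d)), IsProbabilityMeasure ξ → ∀ x x',
      |H ξ x - H ξ x'| ≤ L * ‖x - x'‖ := by
    intro ξ hξ x x'
    haveI := hξ
    have h1 : H ξ x - H ξ x' = ∫ y, (g x y - g x' y) ∂ξ :=
      (integral_sub (intgx ξ hξ x) (intgx ξ hξ x')).symm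
    rw [h1]
    have h2 : |∫ y, (g x y - g x' y) ∂ξ| ≤ ∫ y, |g x y - g x' y| ∂ξ := by
      simpa [Real.norm_eq_abs] using
        norm_integral_le_integral_norm (μ := ξ) (fun y => g x y - g x' y)
    refine h2.trans ?_
    calc ∫ y, |g x y - g x' y| ∂ξ ≤ ∫ _y, L * ‖x - x'‖ ∂ξ :=
          integral_mono (((intgx ξ hξ x).sub (intgx ξ hξ x')).abs) (integrable_const _)
            (fun y => hlip x x' y)
      _ = L * ‖x - x'‖ := by simp
  have H0 : ∀ (ξ : Measure (Rd d)), IsProbabilityMeasure ξ → ∀ x, 0 ≤ H ξ x :=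
    fun ξ _ x => integral_nonneg fun y => hg0 x y
  have HB : ∀ (ξ : Measure (Rd d)), IsProbabilityMeasure ξ → ∀ x, H ξ x ≤ B := by
    intro ξ hξ x
    haveI := hξ
    calc H ξ x ≤ ∫ _y, B ∂ξ :=
          integral_mono (intgx ξ hξ x) (integrable_const B) (fun y => hgB x y)
      _ = B := by simp
  have Hcont : ∀ (ξ : Measure (Rd d)), IsProbabilityMeasure ξ → Continuous (H ξ) := by
    intro ξ hξ
    have lw : LipschitzWith (Real.toNNReal L) (H ξ) :=
      LipschitzWith.of_dist_le_mul (fun x y => by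
        rw [Real.dist_eq, dist_eq_norm, Real.coe_toNNReal L hL]
        exact Hlip ξ hξ x y)
    exact lw.continuous
  have Hint : ∀ (κ ξ : Measure (Rd d)), IsProbabilityMeasure κ → IsProbabilityMeasure ξ →
      Integrable (H ξ) κ := by
    intro κ ξ hκ hξ
    haveI := hκ
    refine (integrable_const B).mono' (Hcont ξ hξ).aestronglyMeasurable
      (Filter.Eventually.of_forall fun x => ?_)
    rw [Real.norm_eq_abs, abs_of_nonneg (H0 ξ hξ x)]; exact HB ξ hξ x
  have Hpt : ∀ x, Tendsto (fun n => H (νs n) x) atTop (𝓝 (H ν x)) := by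
    intro x
    exact hνc (fun y => g x y) (hcont.comp (Continuous.prodMk_right x))
      ⟨B, fun y => by rw [abs_of_nonneg (hg0 x y)]; exact hgB x y⟩
  have hfub : ∀ n, ∫ p : Rd d × Rd d, g p.1 p.2 ∂((μs n).prod (νs n))
      = ∫ x, H (νs n) x ∂(μs n) := by
    intro n
    haveI := hμs n; haveI := hνs n
    exact integral_prod _ (intg _ _ (hμs n) (hνs n))
  have hfub0 : ∫ p : Rd d × Rd d, g p.1 p.2 ∂(μ.prod ν) = ∫ x, H ν x ∂μ :=
    integral_prod _ (intg _ _ hμ hν)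
  simp only [hfub, hfub0]
  refine Metric.tendsto_nhds.mpr fun ε hε => ?_
  set ε' : ℝ := ε / (2 * B + 4) with hε'
  have hε'pos : 0 < ε' := by positivity
  have hεeq : ε' * (2 * B + 4) = ε := by
    rw [hε']; field_simp
  obtain ⟨R, hRpos, hRev⟩ := tightness hμs hμ hμc hε'pos
  set K : Set (Rd d) := Metric.closedBall (0 : Rd d) R with hKdef
  have hKc : IsCompact K := isCompact_closedBall 0 R
  have hunif := unif_compact hKc hL (fun n x y => Hlip (νs n) (hνs n) x y)
    (fun x y => Hlip ν hν x y) Hpt hε'pos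
  have hHconv := hμc (H ν) (Hcont ν hν)
    ⟨B, fun x => by rw [abs_of_nonneg (H0 ν hν x)]; exact HB ν hν x⟩
  have hHev : ∀ᶠ n in atTop, |∫ x, H ν x ∂(μs n) - ∫ x, H ν x ∂μ| < ε' := by
    filter_upwards [Metric.tendsto_nhds.mp hHconv ε' hε'pos] with n hn
    rwa [Real.dist_eq] at hn
  filter_upwards [hRev, hunif, hHev] with n h1 h2 h3
  haveI := hμs n; haveI := hνs n
  have intHn : Integrable (H (νs n)) (μs n) := Hint _ _ (hμs n) (hνs n)
  have intH : Integrable (H ν) (μs n) := Hint _ _ (hμs n) hν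
  have hmsK : MeasurableSet Kᶜ := measurableSet_closedBall.compl
  have step : |∫ x, H (νs n) x ∂(μs n) - ∫ x, H ν x ∂(μs n)| ≤ ε' + 2 * B * ε' := by
    have hsubeq : ∫ x, H (νs n) x ∂(μs n) - ∫ x, H ν x ∂(μs n)
        = ∫ x, (H (νs n) x - H ν x) ∂(μs n) := (integral_sub intHn intH).symm
    rw [hsubeq]
    have habs : |∫ x, (H (νs n) x - H ν x) ∂(μs n)|
        ≤ ∫ x, |H (νs n) x - H ν x| ∂(μs n) := by
      simpa [Real.norm_eq_abs] using
        norm_integral_le_integral_norm (μ := μs n) (fun x => H (νs n) x - H ν x)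
    refine habs.trans ?_
    have hptw : ∀ x, |H (νs n) x - H ν x| ≤ ε' + Kᶜ.indicator (fun _ => 2 * B) x := by
      intro x
      by_cases hx : x ∈ K
      · rw [Set.indicator_of_notMem (by simpa using hx)]
        have := h2 x hx
        linarith
      · rw [Set.indicator_of_mem (by simpa using hx)]
        have b1 := abs_sub (H (νs n) x) (H ν x)
        have b2 : |H (νs n) x| ≤ B := by
          rw [abs_of_nonneg (H0 _ (hνs n) x)]; exact HB _ (hνs n) x
        have b3 : |H ν x| ≤ B := by
          rw [abs_of_nonneg (H0 _ hν x)]; exact HB _ hν x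
        have b4 : |H (νs n) x - H ν x| ≤ |H (νs n) x| + |H ν x| := abs_sub _ _
        linarith
    have hint2 : Integrable (fun x => ε' + Kᶜ.indicator (fun _ => 2 * B) x) (μs n) :=
      (integrable_const ε').add ((integrable_const (2 * B)).indicator hmsK)
    have hibound : ∫ x, |H (νs n) x - H ν x| ∂(μs n)
        ≤ ∫ x, (ε' + Kᶜ.indicator (fun _ => 2 * B) x) ∂(μs n) :=
      integral_mono ((intHn.sub intH).abs) hint2 hptw
    refine hibound.trans ?_
    have hii : ∫ x, (ε' + Kᶜ.indicator (fun _ => 2 * B) x) ∂(μs n)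
        = ε' + ((μs n) Kᶜ).toReal * (2 * B) := by
      rw [integral_add (integrable_const ε') ((integrable_const (2 * B)).indicator hmsK),
        integral_const, integral_indicator_const _ hmsK, smul_eq_mul, smul_eq_mul]
      simp [measure_univ, measureReal_def]
    rw [hii]
    have : ((μs n) Kᶜ).toReal * (2 * B) ≤ ε' * (2 * B) :=
      mul_le_mul_of_nonneg_right h1 (by linarith)
    nlinarith
  rw [Real.dist_eq]
  have tri := abs_sub_le (∫ x, H (νs n) x ∂(μs n)) (∫ x, H ν x ∂(μs n)) (∫ x, H ν x ∂μ)
  have hfin : (ε' + 2 * B * ε') + ε' < ε := by nlinarith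
  linarith

/-! #### The monotone Lipschitz approximation of `t ^ α` -/

lemma rpow_split {t α : ℝ} (ht : 0 < t) : t ^ α = t ^ (α - 1) * t := by
  rw [← Real.rpow_add_one ht.ne' (α - 1), sub_add_cancel]

lemma tstar_pos {α M : ℝ} (hM : 0 < M) : 0 < M ^ (1 / (α - 1)) :=
  Real.rpow_pos_of_pos hM _

lemma tstar_pow {α M : ℝ} (hα : α < 0) (hM : 0 < M) :
    (M ^ (1 / (α - 1))) ^ (α - 1) = M := by
  rw [← Real.rpow_mul hM.le, one_div,
    inv_mul_cancel₀ (ne_of_lt (by linarith : α - 1 < 0)), Real.rpow_one]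

lemma psi_eq_right {α M t : ℝ} (hα : α < 0) (hM : 0 < M) (ht : 0 ≤ t)
    (hts : t ≤ M ^ (1 / (α - 1))) : min (t ^ α) (M * t) = M * t := by
  rcases ht.lt_or_eq with h | h
  · apply min_eq_right
    have h1 : M ≤ t ^ (α - 1) := by
      have h2 := Real.rpow_le_rpow_of_nonpos h hts (by linarith : α - 1 ≤ 0)
      rwa [tstar_pow hα hM] at h2
    calc M * t ≤ t ^ (α - 1) * t := mul_le_mul_of_nonneg_right h1 ht
      _ = t ^ α := (rpow_split h).symm
  · rw [← h]
    simp [Real.zero_rpow (ne_of_lt hα)]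

lemma psi_eq_left {α M t : ℝ} (hα : α < 0) (hM : 0 < M)
    (hts : M ^ (1 / (α - 1)) ≤ t) : min (t ^ α) (M * t) = t ^ α := by
  have htpos : 0 < t := lt_of_lt_of_le (tstar_pos hM) hts
  apply min_eq_left
  have h1 : t ^ (α - 1) ≤ M := by
    have h2 := Real.rpow_le_rpow_of_nonpos (tstar_pos hM) hts (by linarith : α - 1 ≤ 0)
    rwa [tstar_pow hα hM] at h2
  rw [rpow_split htpos]
  exact mul_le_mul_of_nonneg_right h1 htpos.le

lemma psi_le_bound {α M t : ℝ} (hα : α < 0) (hM : 0 < M) (ht : 0 ≤ t) :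
    min (t ^ α) (M * t) ≤ M * M ^ (1 / (α - 1)) := by
  rcases le_total t (M ^ (1 / (α - 1))) with h | h
  · rw [psi_eq_right hα hM ht h]
    exact mul_le_mul_of_nonneg_left h hM.le
  · rw [psi_eq_left hα hM h]
    have h1 : t ^ α ≤ (M ^ (1 / (α - 1))) ^ α :=
      Real.rpow_le_rpow_of_nonpos (tstar_pos hM) h hα.le
    refine h1.trans (le_of_eq ?_)
    rw [rpow_split (tstar_pos hM), tstar_pow hα hM]

lemma rpow_lip {α M : ℝ} (hα : α < 0) (hM : 0 < M) {s t : ℝ}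
    (hs : M ^ (1 / (α - 1)) ≤ s) (ht : M ^ (1 / (α - 1)) ≤ t) :
    |t ^ α - s ^ α| ≤ (|α| * M) * |t - s| := by
  have hds : ∀ x ∈ Set.Ici (M ^ (1 / (α - 1))),
      HasDerivWithinAt (fun u : ℝ => u ^ α) (α * x ^ (α - 1))
        (Set.Ici (M ^ (1 / (α - 1)))) x := by
    intro x hx
    exact (Real.hasDerivAt_rpow_const
      (Or.inl (ne_of_gt (lt_of_lt_of_le (tstar_pos hM) hx)))).hasDerivWithinAt
  have hbd : ∀ x ∈ Set.Ici (M ^ (1 / (α - 1))), ‖α * x ^ (α - 1)‖ ≤ |α| * M := by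
    intro x hx
    rw [Real.norm_eq_abs, abs_mul]
    have hxpos : 0 < x := lt_of_lt_of_le (tstar_pos hM) hx
    have h1 : x ^ (α - 1) ≤ M := by
      have h2 := Real.rpow_le_rpow_of_nonpos (tstar_pos hM) hx (by linarith : α - 1 ≤ 0)
      rwa [tstar_pow hα hM] at h2
    have h2 : |x ^ (α - 1)| = x ^ (α - 1) := abs_of_nonneg (Real.rpow_nonneg hxpos.le _)
    rw [h2]
    exact mul_le_mul_of_nonneg_left h1 (abs_nonneg α)
  have hres := Convex.norm_image_sub_le_of_norm_hasDerivWithin_le hds hbd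
    (convex_Ici _) hs ht
  simpa [Real.norm_eq_abs] using hres

lemma psi_lip {α M : ℝ} (hα : α < 0) (hM : 0 < M) :
    ∀ s t : ℝ, 0 ≤ s → 0 ≤ t →
      |min (t ^ α) (M * t) - min (s ^ α) (M * s)| ≤ ((1 + |α|) * M) * |t - s| := by
  have main : ∀ s t : ℝ, 0 ≤ s → s ≤ t →
      |min (t ^ α) (M * t) - min (s ^ α) (M * s)| ≤ ((1 + |α|) * M) * (t - s) := by
    intro s t hs hst
    have ht : 0 ≤ t := hs.trans hst
    have hTpos : 0 < M ^ (1 / (α - 1)) := tstar_pos hM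
    have hLbig1 : M ≤ (1 + |α|) * M := by nlinarith [abs_nonneg α]
    have hLbig2 : |α| * M ≤ (1 + |α|) * M := by nlinarith [hM.le]
    rcases le_total t (M ^ (1 / (α - 1))) with h1 | h1
    · rw [psi_eq_right hα hM ht h1, psi_eq_right hα hM hs (hst.trans h1)]
      have he : |M * t - M * s| = M * (t - s) := by
        rw [← mul_sub, abs_of_nonneg (mul_nonneg hM.le (by linarith))]
      rw [he]
      exact mul_le_mul_of_nonneg_right hLbig1 (by linarith)
    · rcases le_total (M ^ (1 / (α - 1))) s with h2 | h2
      · rw [psi_eq_left hα hM h1, psi_eq_left hα hM h2]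
        refine (rpow_lip hα hM h2 h1).trans ?_
        rw [abs_of_nonneg (by linarith : (0 : ℝ) ≤ t - s)]
        exact mul_le_mul_of_nonneg_right hLbig2 (by linarith)
      · have e1 : |min (t ^ α) (M * t) - min ((M ^ (1 / (α - 1))) ^ α)
            (M * M ^ (1 / (α - 1)))| ≤ ((1 + |α|) * M) * (t - M ^ (1 / (α - 1))) := by
          rw [psi_eq_left hα hM h1, psi_eq_left hα hM le_rfl]
          refine (rpow_lip hα hM le_rfl h1).trans ?_
          rw [abs_of_nonneg (by linarith : (0 : ℝ) ≤ t - M ^ (1 / (α - 1)))]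
          exact mul_le_mul_of_nonneg_right hLbig2 (by linarith)
        have e2 : |min ((M ^ (1 / (α - 1))) ^ α) (M * M ^ (1 / (α - 1)))
            - min (s ^ α) (M * s)| ≤ ((1 + |α|) * M) * (M ^ (1 / (α - 1)) - s) := by
          rw [psi_eq_right hα hM hTpos.le le_rfl, psi_eq_right hα hM hs h2]
          have he : |M * M ^ (1 / (α - 1)) - M * s| = M * (M ^ (1 / (α - 1)) - s) := by
            rw [← mul_sub, abs_of_nonneg (mul_nonneg hM.le (by linarith))]
          rw [he]
          exact mul_le_mul_of_nonneg_right hLbig1 (by linarith)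
        have tri := abs_sub_le (min (t ^ α) (M * t))
          (min ((M ^ (1 / (α - 1))) ^ α) (M * M ^ (1 / (α - 1)))) (min (s ^ α) (M * s))
        calc |min (t ^ α) (M * t) - min (s ^ α) (M * s)|
            ≤ ((1 + |α|) * M) * (t - M ^ (1 / (α - 1)))
              + ((1 + |α|) * M) * (M ^ (1 / (α - 1)) - s) := by linarith
          _ = ((1 + |α|) * M) * (t - s) := by ring
  intro s t hs ht
  rcases le_total s t with h | h
  · have := main s t hs h
    rwa [abs_of_nonneg (by linarith : (0 : ℝ) ≤ t - s)]
  · have h2 := main t s ht h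
    rw [abs_sub_comm, abs_sub_comm t s]
    rwa [abs_of_nonneg (by linarith : (0 : ℝ) ≤ s - t)]

/-! #### Lower semicontinuity of the Riesz interaction integral -/

lemma riesz_liminf (d : ℕ) (σ : ℝ) (hσ0 : 0 < σ) (hσd : σ < (d : ℝ) / 2)
    {μs νs : ℕ → Measure (Rd d)} {μ ν : Measure (Rd d)}
    (hμs : ∀ n, IsProbabilityMeasure (μs n)) (hνs : ∀ n, IsProbabilityMeasure (νs n))
    (hμ : IsProbabilityMeasure μ) (hν : IsProbabilityMeasure ν)
    (hμc : NarrowTendsto μs μ) (hνc : NarrowTendsto νs ν) :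
    ∫⁻ p : Rd d × Rd d, ENNReal.ofReal (rieszK d σ (p.1 - p.2)) ∂(μ.prod ν) ≤
      liminf (fun n => ∫⁻ p : Rd d × Rd d,
        ENNReal.ofReal (rieszK d σ (p.1 - p.2)) ∂((μs n).prod (νs n))) atTop := by
  haveI := hμ; haveI := hν
  set α : ℝ := -(d : ℝ) + 2 * σ with hαdef
  have hα : α < 0 := by rw [hαdef]; linarith
  set C : ℝ := rieszC d σ with hCdef
  have hC0 : 0 ≤ C := by
    rw [hCdef]
    unfold rieszC
    have h1 : (0 : ℝ) < Real.pi ^ (-(d : ℝ) / 2) := Real.rpow_pos_of_pos Real.pi_pos _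
    have h2 : (0 : ℝ) < (2 : ℝ) ^ (-(2 * σ)) := Real.rpow_pos_of_pos two_pos _
    have h3 : 0 < Real.Gamma ((d : ℝ) / 2 - σ) := Real.Gamma_pos_of_pos (by linarith)
    have h4 : 0 < Real.Gamma σ := Real.Gamma_pos_of_pos hσ0
    positivity
  have hKeq : ∀ x : Rd d, rieszK d σ x = C * ‖x‖ ^ α := by
    intro x; rw [hCdef, hαdef]; rfl
  set g : ℕ → Rd d → Rd d → ℝ :=
    fun m x y => C * min (‖x - y‖ ^ α) (((m : ℝ) + 1) * ‖x - y‖) with hg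
  have hM : ∀ m : ℕ, (0 : ℝ) < (m : ℝ) + 1 := fun m => by positivity
  -- basic bounds for g
  have hg0 : ∀ m (x y : Rd d), 0 ≤ g m x y := by
    intro m x y
    refine mul_nonneg hC0 (le_min (Real.rpow_nonneg (norm_nonneg _) _) ?_)
    exact mul_nonneg (hM m).le (norm_nonneg _)
  have hgB : ∀ m (x y : Rd d),
      g m x y ≤ C * (((m : ℝ) + 1) * ((m : ℝ) + 1) ^ (1 / (α - 1))) := by
    intro m x y
    exact mul_le_mul_of_nonneg_left (psi_le_bound hα (hM m) (norm_nonneg _)) hC0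
  have hglip : ∀ m (x x' y : Rd d),
      |g m x y - g m x' y| ≤ (C * ((1 + |α|) * ((m : ℝ) + 1))) * ‖x - x'‖ := by
    intro m x x' y
    have h1 : |g m x y - g m x' y|
        = C * |min (‖x - y‖ ^ α) (((m : ℝ) + 1) * ‖x - y‖)
            - min (‖x' - y‖ ^ α) (((m : ℝ) + 1) * ‖x' - y‖)| := by
      rw [hg]; dsimp only
      rw [← mul_sub, abs_mul, abs_of_nonneg hC0]
    rw [h1, mul_assoc]
    refine mul_le_mul_of_nonneg_left ?_ hC0
    have h2 := psi_lip hα (hM m) ‖x' - y‖ ‖x - y‖ (norm_nonneg _) (norm_nonneg _)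
    refine h2.trans ?_
    refine mul_le_mul_of_nonneg_left ?_ (by positivity)
    have h3 : |‖x - y‖ - ‖x' - y‖| ≤ ‖(x - y) - (x' - y)‖ := abs_norm_sub_norm_le _ _
    have h4 : (x - y) - (x' - y) = x - x' := by abel
    rw [h4] at h3
    exact h3
  have hgcont : ∀ m, Continuous (fun p : Rd d × Rd d => g m p.1 p.2) := by
    intro m
    have hlipOn : LipschitzOnWith (Real.toNNReal ((1 + |α|) * ((m : ℝ) + 1)))
        (fun t : ℝ => min (t ^ α) (((m : ℝ) + 1) * t)) (Set.Ici 0) := by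
      rw [lipschitzOnWith_iff_dist_le_mul]
      intro x hx y hy
      rw [Real.dist_eq, Real.dist_eq, Real.coe_toNNReal _ (by positivity)]
      exact psi_lip hα (hM m) y x (Set.mem_Ici.mp hy) (Set.mem_Ici.mp hx)
    have h1 : Continuous (fun p : Rd d × Rd d => ‖p.1 - p.2‖) :=
      (continuous_fst.sub continuous_snd).norm
    have h2 := hlipOn.continuousOn.comp_continuous h1
      (fun p => Set.mem_Ici.mpr (norm_nonneg _))
    exact continuous_const.mul h2
  -- pointwise monotone supremum
  have hsup : ∀ p : Rd d × Rd d,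
      ENNReal.ofReal (rieszK d σ (p.1 - p.2)) = ⨆ m : ℕ, ENNReal.ofReal (g m p.1 p.2) := by
    intro p
    rw [hKeq]
    set t : ℝ := ‖p.1 - p.2‖ with ht
    have ht0 : 0 ≤ t := norm_nonneg _
    apply le_antisymm
    · rcases ht0.lt_or_eq with h0 | h0
      · obtain ⟨m, hm⟩ := exists_nat_ge (t ^ (α - 1))
        have h1 : t ^ (α - 1) ≤ (m : ℝ) + 1 := hm.trans (by linarith)
        have h2 : t ^ α ≤ ((m : ℝ) + 1) * t := by
          rw [rpow_split h0]
          exact mul_le_mul_of_nonneg_right h1 ht0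
        have h3 : g m p.1 p.2 = C * t ^ α := by
          rw [hg]; dsimp only
          rw [← ht, min_eq_left h2]
        refine le_trans (le_of_eq ?_) (le_iSup (fun m => ENNReal.ofReal (g m p.1 p.2)) m)
        rw [h3]
      · rw [← h0]
        simp [Real.zero_rpow (ne_of_lt hα)]
    · refine iSup_le fun m => ENNReal.ofReal_le_ofReal ?_
      exact mul_le_mul_of_nonneg_left (min_le_left _ _) hC0
  have hmono : Monotone (fun m : ℕ => fun p : Rd d × Rd d => ENNReal.ofReal (g m p.1 p.2)) := by
    intro m m' hmm' p
    apply ENNReal.ofReal_le_ofReal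
    refine mul_le_mul_of_nonneg_left ?_ hC0
    refine min_le_min le_rfl (mul_le_mul_of_nonneg_right ?_ (norm_nonneg _))
    have : (m : ℝ) ≤ (m' : ℝ) := Nat.cast_le.mpr hmm'
    linarith
  have hmeas : ∀ m, Measurable (fun p : Rd d × Rd d => ENNReal.ofReal (g m p.1 p.2)) :=
    fun m => (ENNReal.continuous_ofReal.comp (hgcont m)).measurable
  calc ∫⁻ p : Rd d × Rd d, ENNReal.ofReal (rieszK d σ (p.1 - p.2)) ∂(μ.prod ν)
      = ∫⁻ p : Rd d × Rd d, ⨆ m : ℕ, ENNReal.ofReal (g m p.1 p.2) ∂(μ.prod ν) :=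
        lintegral_congr hsup
    _ = ⨆ m : ℕ, ∫⁻ p : Rd d × Rd d, ENNReal.ofReal (g m p.1 p.2) ∂(μ.prod ν) :=
        lintegral_iSup hmeas hmono
    _ ≤ liminf (fun n => ∫⁻ p : Rd d × Rd d,
          ENNReal.ofReal (rieszK d σ (p.1 - p.2)) ∂((μs n).prod (νs n))) atTop := by
        refine iSup_le fun m => ?_
        -- Bochner integrability of g m over probability products
        have intg : ∀ (κ ξ : Measure (Rd d)), IsProbabilityMeasure κ →
            IsProbabilityMeasure ξ →
            Integrable (fun p : Rd d × Rd d => g m p.1 p.2) (κ.prod ξ) := by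
          intro κ ξ hκ hξ
          haveI := hκ; haveI := hξ
          refine (integrable_const (C * (((m : ℝ) + 1) * ((m : ℝ) + 1) ^ (1 / (α - 1))))).mono'
            (hgcont m).aestronglyMeasurable (Filter.Eventually.of_forall fun p => ?_)
          rw [Real.norm_eq_abs, abs_of_nonneg (hg0 m _ _)]
          exact hgB m _ _
        have hlim : Tendsto (fun n => ∫ p : Rd d × Rd d, g m p.1 p.2 ∂((μs n).prod (νs n)))
            atTop (𝓝 (∫ p : Rd d × Rd d, g m p.1 p.2 ∂(μ.prod ν))) := by
          refine keyConv (B := C * (((m : ℝ) + 1) * ((m : ℝ) + 1) ^ (1 / (α - 1))))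
            (L := C * ((1 + |α|) * ((m : ℝ) + 1))) ?_ ?_ (hgcont m) (hg0 m) (hgB m)
            (hglip m) hμs hνs hμ hν hμc hνc
          · have := tstar_pos (α := α) (hM m); positivity
          · positivity
        have heq : ∀ (κ ξ : Measure (Rd d)), IsProbabilityMeasure κ →
            IsProbabilityMeasure ξ →
            ∫⁻ p : Rd d × Rd d, ENNReal.ofReal (g m p.1 p.2) ∂(κ.prod ξ)
              = ENNReal.ofReal (∫ p : Rd d × Rd d, g m p.1 p.2 ∂(κ.prod ξ)) := by
          intro κ ξ hκ hξ
          exact (ofReal_integral_eq_lintegral_ofReal (intg κ ξ hκ hξ)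
            (Filter.Eventually.of_forall fun p => hg0 m _ _)).symm
        have hlim' : Tendsto (fun n => ∫⁻ p : Rd d × Rd d,
            ENNReal.ofReal (g m p.1 p.2) ∂((μs n).prod (νs n))) atTop
            (𝓝 (∫⁻ p : Rd d × Rd d, ENNReal.ofReal (g m p.1 p.2) ∂(μ.prod ν))) := by
          have h2 : (fun n => ∫⁻ p : Rd d × Rd d,
              ENNReal.ofReal (g m p.1 p.2) ∂((μs n).prod (νs n)))
              = fun n => ENNReal.ofReal (∫ p : Rd d × Rd d, g m p.1 p.2
                  ∂((μs n).prod (νs n))) := by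
            funext n; exact heq _ _ (hμs n) (hνs n)
          rw [h2, heq _ _ hμ hν]
          exact (ENNReal.continuous_ofReal.tendsto _).comp hlim
        rw [← hlim'.liminf_eq]
        refine liminf_le_liminf (Filter.Eventually.of_forall fun n => ?_)
        refine lintegral_mono fun p => ENNReal.ofReal_le_ofReal ?_
        rw [hKeq]
        exact mul_le_mul_of_nonneg_left (min_le_left _ _) hC0

end S5Aux

/-- The interaction energy is non-negative and sequentially lower
semi-continuous with respect to narrow convergence on sequences with bounded energy. -/
theorem statement5 (d : ℕ) (hd : 1 ≤ d) (s r q : ℝ)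
    (hs : 0 < s ∧ s < min 1 ((d : ℝ) / 2)) (hr : 0 < r ∧ r < min 1 ((d : ℝ) / 2))
    (hq : 0 < q ∧ q < min 1 ((d : ℝ) / 2)) :
    (∀ ρ η : Measure (Rd d), IsP2 ρ → IsP2 η → 0 ≤ interEnergy d s r q ρ η) ∧
    ∀ (ρn ηn : ℕ → Measure (Rd d)) (ρ η : Measure (Rd d)),
      (∀ n, IsP2 (ρn n)) → (∀ n, IsP2 (ηn n)) → IsP2 ρ → IsP2 η →
      NarrowTendsto ρn ρ → NarrowTendsto ηn η →
      (⨆ n, interEnergy d s r q (ρn n) (ηn n)) < ⊤ →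
      interEnergy d s r q ρ η ≤ liminf (fun n => interEnergy d s r q (ρn n) (ηn n)) atTop := by
  constructor
  · intro ρ η _ _
    exact bot_le
  · intro ρn ηn ρ η hρn hηn hρ hη hρc hηc _
    have hsd : s < (d : ℝ) / 2 := lt_of_lt_of_le hs.2 (min_le_right _ _)
    have hrd : r < (d : ℝ) / 2 := lt_of_lt_of_le hr.2 (min_le_right _ _)
    have hqd : q < (d : ℝ) / 2 := lt_of_lt_of_le hq.2 (min_le_right _ _)
    have h1 := S5Aux.riesz_liminf d s hs.1 hsd (fun n => (hρn n).1) (fun n => (hρn n).1)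
      hρ.1 hρ.1 hρc hρc
    have h2 := S5Aux.riesz_liminf d r hr.1 hrd (fun n => (hηn n).1) (fun n => (hηn n).1)
      hη.1 hη.1 hηc hηc
    have h3 := S5Aux.riesz_liminf d q hq.1 hqd (fun n => (hρn n).1) (fun n => (hηn n).1)
      hρ.1 hη.1 hρc hηc
    simp only [interEnergy]
    have c1 : (1 / 2 : ℝ≥0∞) * ∫⁻ p : Rd d × Rd d,
        ENNReal.ofReal (rieszK d s (p.1 - p.2)) ∂(ρ.prod ρ)
        ≤ liminf (fun n => (1 / 2 : ℝ≥0∞) * ∫⁻ p : Rd d × Rd d,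
            ENNReal.ofReal (rieszK d s (p.1 - p.2)) ∂((ρn n).prod (ρn n))) atTop :=
      le_trans (mul_le_mul_right h1 _) (S5Aux.liminf_const_mul_le _ _)
    have c2 : (1 / 2 : ℝ≥0∞) * ∫⁻ p : Rd d × Rd d,
        ENNReal.ofReal (rieszK d r (p.1 - p.2)) ∂(η.prod η)
        ≤ liminf (fun n => (1 / 2 : ℝ≥0∞) * ∫⁻ p : Rd d × Rd d,
            ENNReal.ofReal (rieszK d r (p.1 - p.2)) ∂((ηn n).prod (ηn n))) atTop :=
      le_trans (mul_le_mul_right h2 _) (S5Aux.liminf_const_mul_le _ _)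
    have c12 := le_trans (add_le_add c1 c2) (S5Aux.liminf_superadd _ _)
    exact le_trans (add_le_add c12 h3) (S5Aux.liminf_superadd _ _)
end
end
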